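/- Consider the nonmonotone descent method with oracle applied to p, run with tolerance ε > 0, i.e., terminating at the first iteration j with ‖∇ₓF(xʲ, zʲ)‖ ≤ ε, and suppose inf p ∈ ℝ and that the sequence {xʲ} admits an accumulation point. Then the method terminates after finitely many iterations, returning a pair (x*, z*) with z* ∈ O(x*) and ‖∇ₓF(x*, z*)‖ ≤ ε; in particular, x* is an ε-Υ-stationary point of p with certificate z*. -/

import Mathlib

open Filter Topology Bornology

noncomputable section

variable {H : Type*} [NormedAddCommGroup H] [InnerProductSpace ℝ H]

/-- The regular (Fréchet) subdifferential of an extended-real-valued function `h` at `x`: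
`v` belongs to it iff `h x` is finite and
`liminf_{w → x, w ≠ x} (h w − h x − ⟨v, w − x⟩)/‖w − x‖ ≥ 0`. -/
def regSubdiff (h : H → EReal) (x : H) : Set H :=
  {v | h x ≠ ⊤ ∧ h x ≠ ⊥ ∧ (0 : EReal) ≤
    Filter.liminf
      (fun w => (h w - h x - ((inner ℝ v (w - x) : ℝ) : EReal)) / ((‖w - x‖ : ℝ) : EReal))
      (𝓝[≠] x)}

/-- The limiting (Mordukhovich) subdifferential of `h` at `x`: limits of regular subgradients
along `h`-attentively convergent sequences. -/
def limSubdiff (h : H → EReal) (x : H) : Set H :=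
  {v | ∃ xs vs : ℕ → H,
      Tendsto xs atTop (𝓝 x) ∧ Tendsto (fun k => h (xs k)) atTop (𝓝 (h x)) ∧
      (∀ k, vs k ∈ regSubdiff h (xs k)) ∧ Tendsto vs atTop (𝓝 v)}

/-- The proximal mapping of `g` with parameter `γ` evaluated at `u`, as a set:
`argmin_z { g(z) + ‖z − u‖²/(2γ) }`. -/
def proxSet (g : H → EReal) (γ : ℝ) (u : H) : Set H :=
  {z | ∀ w, g z + ((‖z - u‖ ^ 2 / (2 * γ) : ℝ) : EReal) ≤
        g w + ((‖w - u‖ ^ 2 / (2 * γ) : ℝ) : EReal)}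

/-- `g + ‖·‖²/(2γ)` is bounded below on the whole space. -/
def ProxBoundedAt (g : H → EReal) (γ : ℝ) : Prop :=
  ∃ b : ℝ, ∀ z, (b : EReal) ≤ g z + ((‖z‖ ^ 2 / (2 * γ) : ℝ) : EReal)

/-- `g` is prox-bounded: `g + ‖·‖²/(2γ)` is bounded below for some `γ > 0`. -/
def ProxBounded (g : H → EReal) : Prop :=
  ∃ γ > (0 : ℝ), ProxBoundedAt g γ

/-- The limiting normal cone to `D` at `z`: limits of `λᵏ (vᵏ − wᵏ)` with `λᵏ ≥ 0`,
`wᵏ` a Euclidean projection of `vᵏ` onto `D`, and `vᵏ → z`. -/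
def limNormalCone {H' : Type*} [NormedAddCommGroup H'] [NormedSpace ℝ H']
    (D : Set H') (z : H') : Set H' :=
  {v | ∃ (vs ws : ℕ → H') (ls : ℕ → ℝ), (∀ k, 0 ≤ ls k) ∧
      (∀ k, ws k ∈ D ∧ ∀ u ∈ D, ‖ws k - vs k‖ ≤ ‖u - vs k‖) ∧
      Tendsto vs atTop (𝓝 z) ∧ Tendsto (fun k => ls k • (vs k - ws k)) atTop (𝓝 v)}


/-- Smooth part of the explicit AL function: `F(x,z) = f(x) + ‖c(x) + μŷ − z‖²/(2μ)`. -/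
def Ffun {n m : ℕ} (f : EuclideanSpace ℝ (Fin n) → ℝ)
    (c : EuclideanSpace ℝ (Fin n) → EuclideanSpace ℝ (Fin m))
    (μ : ℝ) (yh : EuclideanSpace ℝ (Fin m))
    (xx : EuclideanSpace ℝ (Fin n)) (zz : EuclideanSpace ℝ (Fin m)) : ℝ :=
  f xx + ‖c xx + μ • yh - zz‖ ^ 2 / (2 * μ)

/-- The implicit AL function: `p(x) = inf_z { F(x,z) + g(z) }`. -/
def pfun {n m : ℕ} (f : EuclideanSpace ℝ (Fin n) → ℝ)
    (c : EuclideanSpace ℝ (Fin n) → EuclideanSpace ℝ (Fin m))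
    (g : EuclideanSpace ℝ (Fin m) → EReal)
    (μ : ℝ) (yh : EuclideanSpace ℝ (Fin m)) (xx : EuclideanSpace ℝ (Fin n)) : EReal :=
  ⨅ zz, (((Ffun f c μ yh xx zz : ℝ) : EReal) + g zz)

/-- The partial gradient `∇ₓ F(x, z)`. -/
def gradF {n m : ℕ} (f : EuclideanSpace ℝ (Fin n) → ℝ)
    (c : EuclideanSpace ℝ (Fin n) → EuclideanSpace ℝ (Fin m))
    (μ : ℝ) (yh : EuclideanSpace ℝ (Fin m))
    (xx : EuclideanSpace ℝ (Fin n)) (zz : EuclideanSpace ℝ (Fin m)) :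
    EuclideanSpace ℝ (Fin n) :=
  gradient (fun x' => Ffun f c μ yh x' zz) xx

open scoped InnerProductSpace

/-!
Suppose the method never stops, so `‖∇ₓF(xʲ, zʲ)‖ > ε` for every `j`. The Armijo conditions make
the merit values `Φⱼ` decrease by at least `ν α γⱼ θ ε ‖dʲ‖`, and `Φⱼ ≥ p(xʲ) ≥ inf p`, so
`γⱼ ‖dʲ‖ → 0` and `γⱼ → 0`. Along a subsequence `xʲ → x*`; the oracle points `zʲ` stay bounded
because `g` is prox-bounded with threshold above `μ`, so `∇ₓF` is uniformly continuous on a compact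
set containing all `(xʲ, zʲ)` and nearby points. Since `p ≤ F(·, zʲ) + g(zʲ)` with equality at `xʲ`,
the mean value inequality then shows that, for `j` large, every step `t` with `t ‖dʲ‖` below a fixed
`δ` passes the Armijo test. Backtracking must therefore have accepted `γⱼ ≥ β δ / ‖dʲ‖`,
contradicting `γⱼ ‖dʲ‖ → 0`.
-/

theorem tendsto_zero_of_mul_le {ι : Type*} {l : Filter ι} {a b : ι → ℝ} {C : ℝ}
    (hb : Tendsto b l (𝓝 0)) (hC : 0 < C) (ha : ∀ i, 0 ≤ a i) (hab : ∀ i, C * a i ≤ b i) :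
    Tendsto a l (𝓝 0) :=
  squeeze_zero ha (fun i => (le_div_iff₀' hC).2 (hab i)) (by simpa using hb.div_const C)

section NonmonotoneDescent

variable {P Φ s : ℕ → ℝ} {ν : ℝ}

theorem le_of_nonmonotone_descent (hν : ν ≤ 1) (h0 : P 0 ≤ Φ 0) (hP : ∀ j, P (j + 1) ≤ Φ j)
    (hΦ : ∀ j, Φ (j + 1) = (1 - ν) * Φ j + ν * P (j + 1)) : ∀ j, P j ≤ Φ j
  | 0 => h0
  | j + 1 => by nlinarith [hP j, hΦ j]

theorem tendsto_zero_of_nonmonotone_descent {b : ℝ} (hν : ν ∈ Set.Ioc 0 1) (h0 : P 0 ≤ Φ 0)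
    (hs : ∀ j, s j ≤ 0) (hP : ∀ j, P (j + 1) ≤ Φ j + s j)
    (hΦ : ∀ j, Φ (j + 1) = (1 - ν) * Φ j + ν * P (j + 1)) (hb : ∀ j, b ≤ P j) :
    Tendsto s atTop (𝓝 0) := by
  have hPΦ := le_of_nonmonotone_descent hν.2 h0
    (fun j => (hP j).trans (add_le_of_nonpos_right (hs j))) hΦ
  have hdecrease : ∀ j, ν * -s j ≤ Φ j - Φ (j + 1) := fun j => by
    nlinarith [hP j, hΦ j, hν.1]
  have hanti : Antitone Φ := antitone_nat_of_succ_le fun j => by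
    nlinarith [hdecrease j, hs j, hν.1]
  have hbdd : BddBelow (Set.range Φ) := ⟨b, by rintro _ ⟨j, rfl⟩; exact (hb j).trans (hPΦ j)⟩
  have hΦ_lim := tendsto_atTop_ciInf hanti hbdd
  have hgap : Tendsto (fun j => Φ j - Φ (j + 1)) atTop (𝓝 0) := by
    simpa using hΦ_lim.sub (hΦ_lim.comp (tendsto_add_atTop_nat 1))
  simpa using (tendsto_zero_of_mul_le hgap hν.1 (fun j => neg_nonneg.2 (hs j)) hdecrease).neg

end NonmonotoneDescent

theorem le_and_tendsto_of_nonmonotone_armijo {P Φ γ D a : ℕ → ℝ} {α κ ν b : ℝ} (hα : 0 < α)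
    (hκ : 0 < κ) (hν : ν ∈ Set.Ioc 0 1) (hγ : ∀ j, 0 < γ j) (ha : ∀ j, 0 ≤ a j)
    (hD : ∀ j, D j ≤ -(κ * a j)) (h0 : P 0 ≤ Φ 0) (hP : ∀ j, P (j + 1) ≤ Φ j + α * γ j * D j)
    (hΦ : ∀ j, Φ (j + 1) = (1 - ν) * Φ j + ν * P (j + 1)) (hb : ∀ j, b ≤ P j) :
    (∀ j, P j ≤ Φ j) ∧ Tendsto (fun j => γ j * a j) atTop (𝓝 0) := by
  have hs : ∀ j, α * γ j * D j ≤ 0 := fun j =>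
    mul_nonpos_of_nonneg_of_nonpos (mul_pos hα (hγ j)).le
      ((hD j).trans (neg_nonpos.2 (mul_nonneg hκ.le (ha j))))
  refine ⟨le_of_nonmonotone_descent hν.2 h0
    (fun j => (hP j).trans (add_le_of_nonpos_right (hs j))) hΦ, ?_⟩
  refine tendsto_zero_of_mul_le (by simpa using (tendsto_zero_of_nonmonotone_descent hν h0 hs hP
    hΦ hb).neg) (mul_pos hα hκ) (fun j => mul_nonneg (hγ j).le (ha j)) fun j => ?_
  nlinarith [mul_le_mul_of_nonneg_left (hD j) (mul_pos hα (hγ j)).le]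

theorem backtracking_lower_bound {T : ℝ → Prop} {β γ δ a : ℝ} {l : ℕ} (hβ : 0 < β)
    (hγ : γ = β ^ l) (hγ1 : γ < 1) (hT : ∀ t, 0 ≤ t → t * a ≤ δ → T t)
    (hl : ∀ l' < l, ¬ T (β ^ l')) : β * δ < γ * a := by
  obtain ⟨l', rfl⟩ := Nat.exists_eq_add_one_of_ne_zero fun h : l = 0 => by
    simp [hγ, h] at hγ1
  have hfail : δ < β ^ l' * a := by
    by_contra! h
    exact hl l' (Nat.lt_succ_self l') (hT _ (pow_nonneg hβ.le _) h)
  calc β * δ < β * (β ^ l' * a) := mul_lt_mul_of_pos_left hfail hβ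
    _ = γ * a := by rw [hγ]; ring

theorem exists_eq_coe_of_affine_rec {Φ : ℕ → EReal} {a : ℕ → ℝ} {ν : ℝ} (h0 : Φ 0 = a 0)
    (h : ∀ j, Φ (j + 1) = ((1 - ν : ℝ) : EReal) * Φ j + (ν : EReal) * (a (j + 1) : EReal)) :
    ∃ φ : ℕ → ℝ, Φ = fun j => (φ j : EReal) := by
  have hreal : ∀ j, ∃ r : ℝ, Φ j = r := by
    intro j
    induction j with
    | zero => exact ⟨_, h0⟩
    | succ j ih =>
      obtain ⟨r, hr⟩ := ih
      exact ⟨(1 - ν) * r + ν * a (j + 1), by rw [h, hr]; norm_cast⟩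
  choose φ hφ using hreal
  exact ⟨φ, funext hφ⟩

section PartialGradient

variable {E Z : Type*} [NormedAddCommGroup E] [InnerProductSpace ℝ E] [NormedAddCommGroup Z]
  [NormedSpace ℝ Z] {F : E × Z → ℝ}

theorem ContDiff.hasFDerivAt_partial (hF : ContDiff ℝ 1 F) (x : E) (z : Z) :
    HasFDerivAt (fun y => F (y, z)) ((fderiv ℝ F (x, z)).comp (ContinuousLinearMap.inl ℝ E Z)) x :=
  ((hF.differentiable one_ne_zero (x, z)).hasFDerivAt).comp x (hasFDerivAt_prodMk_left x z)

variable [CompleteSpace E]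

theorem le_add_inner_gradient_add_of_norm_sub_le {φ : E → ℝ} {G : E → E} {x d : E} {t η : ℝ}
    (ht : 0 ≤ t) (hφ : ∀ y ∈ Metric.closedBall x (t * ‖d‖), HasGradientAt φ (G y) y)
    (hG : ∀ y ∈ Metric.closedBall x (t * ‖d‖), ‖G y - G x‖ ≤ η) :
    φ (x + t • d) ≤ φ x + t * ⟪G x, d⟫_ℝ + η * (t * ‖d‖) := by
  have hnorm : ‖(x + t • d) - x‖ = t * ‖d‖ := by
    rw [add_sub_cancel_left, norm_smul, Real.norm_of_nonneg ht]
  have hmem : x + t • d ∈ Metric.closedBall x (t * ‖d‖) := by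
    rw [Metric.mem_closedBall, dist_eq_norm, hnorm]
  have hmvt := (convex_closedBall x (t * ‖d‖)).norm_image_sub_le_of_norm_hasFDerivWithin_le'
    (f' := fun y => InnerProductSpace.toDual ℝ E (G y))
    (fun y hy => (hasGradientAt_iff_hasFDerivAt.1 (hφ y hy)).hasFDerivWithinAt)
    (fun y hy => by rw [← map_sub, LinearIsometryEquiv.norm_map]; exact hG y hy)
    (Metric.mem_closedBall_self (by positivity)) hmem
  rw [hnorm, add_sub_cancel_left, InnerProductSpace.toDual_apply_apply, inner_smul_right] at hmvt
  linarith [le_abs_self (φ (x + t • d) - φ x - t * ⟪G x, d⟫_ℝ), Real.norm_eq_abs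
    (φ (x + t • d) - φ x - t * ⟪G x, d⟫_ℝ)]

theorem ContDiff.continuous_gradient_partial (hF : ContDiff ℝ 1 F) :
    Continuous fun q : E × Z => gradient (fun y => F (y, q.2)) q.1 := by
  have hgrad : (fun q : E × Z => gradient (fun y => F (y, q.2)) q.1) = fun q =>
      (InnerProductSpace.toDual ℝ E).symm ((fderiv ℝ F q).comp (ContinuousLinearMap.inl ℝ E Z)) :=
    funext fun q => (hF.hasFDerivAt_partial q.1 q.2).hasGradientAt.gradient
  rw [hgrad]
  exact (InnerProductSpace.toDual ℝ E).symm.continuous.comp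
    (((ContinuousLinearMap.compL ℝ E (E × Z) ℝ).flip
      (ContinuousLinearMap.inl ℝ E Z)).continuous.comp (hF.continuous_fderiv one_ne_zero))

end PartialGradient

theorem Continuous.exists_eventually_dist_le {X Y V ι : Type*} [PseudoMetricSpace X]
    [ProperSpace X] [PseudoMetricSpace Y] [ProperSpace Y] [PseudoMetricSpace V]
    {G : X × Y → V} (hG : Continuous G) {l : Filter ι} {x : ι → X} {x₀ : X} {y : ι → Y}
    (hx : Tendsto x l (𝓝 x₀)) (hy : IsBounded (Set.range y)) {η : ℝ} (hη : 0 < η) :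
    ∃ δ > 0, ∀ᶠ i in l, ∀ x' ∈ Metric.closedBall (x i) δ,
      dist (G (x', y i)) (G (x i, y i)) ≤ η := by
  set K := Metric.closedBall x₀ 1 ×ˢ closure (Set.range y)
  have hK : IsCompact K := (isCompact_closedBall x₀ 1).prod hy.isCompact_closure
  obtain ⟨δ, hδ, hGδ⟩ :=
    Metric.uniformContinuousOn_iff_le.1 (hK.uniformContinuousOn_of_continuous hG.continuousOn) η hη
  refine ⟨min δ (1 / 2), by positivity, ?_⟩
  filter_upwards [Metric.tendsto_nhds.1 hx (1 / 2) one_half_pos] with i hi x' hx'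
  rw [Metric.mem_closedBall] at hx'
  have hyi : y i ∈ closure (Set.range y) := subset_closure ⟨i, rfl⟩
  refine hGδ _ ⟨?_, hyi⟩ _ ⟨?_, hyi⟩ ?_
  · rw [Metric.mem_closedBall]
    linarith [dist_triangle x' (x i) x₀, min_le_right δ (1 / 2)]
  · rw [Metric.mem_closedBall]
    linarith
  · rw [Prod.dist_eq, dist_self, max_eq_left dist_nonneg]
    exact hx'.trans (min_le_left _ _)

/-- Uniform continuity of `∇ₓF` on a compact neighbourhood of `{x₀} × closure (range z)` bounds
the linearization error of the majorants `P (x i) + F (·, z i) - F (x i, z i)` of `P` by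
`(1 - α) κ t ‖d i‖`, uniformly in `i`. -/
theorem ContDiff.eventually_armijo {E Z ι : Type*} [NormedAddCommGroup E] [InnerProductSpace ℝ E]
    [FiniteDimensional ℝ E] [NormedAddCommGroup Z] [NormedSpace ℝ Z] [FiniteDimensional ℝ Z]
    {F : E × Z → ℝ} (hF : ContDiff ℝ 1 F) {P : E → ℝ} {l : Filter ι} {x d : ι → E} {z : ι → Z}
    {x₀ : E} (hx : Tendsto x l (𝓝 x₀)) (hz : IsBounded (Set.range z))
    (hmaj : ∀ i y, P y ≤ P (x i) + (F (y, z i) - F (x i, z i))) {κ α : ℝ} (hκ : 0 < κ)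
    (hα : α < 1)
    (hdir : ∀ i, ⟪gradient (fun y => F (y, z i)) (x i), d i⟫_ℝ ≤ -(κ * ‖d i‖)) :
    ∃ δ > 0, ∀ᶠ i in l, ∀ t, 0 ≤ t → t * ‖d i‖ ≤ δ →
      P (x i + t • d i) ≤ P (x i) + α * t * ⟪gradient (fun y => F (y, z i)) (x i), d i⟫_ℝ := by
  obtain ⟨δ, hδ, hclose⟩ := hF.continuous_gradient_partial.exists_eventually_dist_le hx hz
    (mul_pos (sub_pos.2 hα) hκ)
  refine ⟨δ, hδ, hclose.mono fun i hi t ht htd => ?_⟩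
  have hF_le := le_add_inner_gradient_add_of_norm_sub_le ht
    (fun y _ => ((hF.hasFDerivAt_partial y (z i)).differentiableAt).hasGradientAt)
    (fun y hy => by rw [← dist_eq_norm]; exact hi y (Metric.closedBall_subset_closedBall htd hy))
  have hdescent := mul_le_mul_of_nonneg_left (hdir i) (mul_nonneg ht (sub_pos.2 hα).le)
  nlinarith [hmaj i (x i + t • d i)]

theorem ProxBoundedAt.ne_bot {X : Type*} [NormedAddCommGroup X] {g : X → EReal} {γ : ℝ}
    (hg : ProxBoundedAt g γ) (z : X) : g z ≠ ⊥ := by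
  obtain ⟨b, hb⟩ := hg
  intro hz
  have := hb z
  rw [hz, EReal.bot_add, le_bot_iff] at this
  exact EReal.coe_ne_bot b this

theorem le_max_of_mul_sq_le_add_mul {δ A B r : ℝ} (hδ : 0 < δ) (hA : 0 ≤ A)
    (h : δ * r ^ 2 ≤ A + B * r) : r ≤ max 1 ((A + B) / δ) := by
  rcases le_or_gt r 1 with hr | hr
  · exact hr.trans (le_max_left _ _)
  · refine le_max_of_le_right ((le_div_iff₀ hδ).2 ?_)
    nlinarith

/-- Since `μ < γ₀`, the lower bound on `g + ‖·‖²/(2γ₀)` makes `g z + ‖z - u‖²/(2μ)` grow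
quadratically in `‖z‖`, uniformly for `u` in a bounded set. -/
theorem ProxBoundedAt.isBounded_biUnion_proxSet {g : H → EReal} {μ γ₀ : ℝ}
    (hg : ProxBoundedAt g γ₀) (hμ : 0 < μ) (hμγ₀ : μ < γ₀) (hproper : ∃ z, g z ≠ ⊤) {s : Set H}
    (hs : IsBounded s) : IsBounded (⋃ u ∈ s, proxSet g μ u) := by
  have hg_ne_bot := hg.ne_bot
  obtain ⟨b, hb⟩ := hg
  obtain ⟨z₀, hz₀⟩ := hproper
  obtain ⟨U, hU, hsU⟩ := hs.exists_pos_norm_le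
  set G₀ := (g z₀).toReal
  have hG₀ : g z₀ = G₀ := (EReal.coe_toReal hz₀ (hg_ne_bot z₀)).symm
  set A := max (2 * μ * γ₀ * (G₀ - b) + γ₀ * (‖z₀‖ + U) ^ 2) 0
  refine isBounded_iff_forall_norm_le.2 ⟨max 1 ((A + 2 * γ₀ * U) / (γ₀ - μ)), ?_⟩
  simp only [Set.mem_iUnion]
  rintro z ⟨u, hu, hz⟩
  have hmin := hz z₀
  have hgz_ne_top : g z ≠ ⊤ := by
    rintro hgz
    rw [hgz, EReal.top_add_coe, hG₀, ← EReal.coe_add, top_le_iff] at hmin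
    exact EReal.coe_ne_top _ hmin
  set G := (g z).toReal
  have hG : g z = G := (EReal.coe_toReal hgz_ne_top (hg_ne_bot z)).symm
  have hbz := hb z
  rw [hG, hG₀, ← EReal.coe_add, ← EReal.coe_add, EReal.coe_le_coe_iff] at hmin
  rw [hG, ← EReal.coe_add, EReal.coe_le_coe_iff] at hbz
  have hu' := hsU u hu
  have hzu : ‖z‖ ^ 2 - 2 * U * ‖z‖ ≤ ‖z - u‖ ^ 2 := by
    nlinarith [norm_sub_sq_real z u, real_inner_le_norm z u, norm_nonneg z, sq_nonneg ‖u‖]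
  have hz₀u : ‖z₀ - u‖ ^ 2 ≤ (‖z₀‖ + U) ^ 2 := by
    nlinarith [norm_sub_le z₀ u, norm_nonneg (z₀ - u)]
  have hγ₀ : 0 < γ₀ := hμ.trans hμγ₀
  field_simp at hmin hbz
  refine le_max_of_mul_sq_le_add_mul (sub_pos.2 hμγ₀) (le_max_right _ _) ?_
  nlinarith [le_max_left (2 * μ * γ₀ * (G₀ - b) + γ₀ * (‖z₀‖ + U) ^ 2) 0]

section AugmentedLagrangian

variable {n m : ℕ} {f : EuclideanSpace ℝ (Fin n) → ℝ}
  {c : EuclideanSpace ℝ (Fin n) → EuclideanSpace ℝ (Fin m)} {g : EuclideanSpace ℝ (Fin m) → EReal}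
  {μ : ℝ} {yh : EuclideanSpace ℝ (Fin m)}

theorem contDiff_Ffun (hf : ContDiff ℝ 1 f) (hc : ContDiff ℝ 1 c) :
    ContDiff ℝ 1 fun q : EuclideanSpace ℝ (Fin n) × EuclideanSpace ℝ (Fin m) =>
      Ffun f c μ yh q.1 q.2 :=
  (hf.comp contDiff_fst).add
    (((((hc.comp contDiff_fst).add contDiff_const).sub contDiff_snd).norm_sq ℝ).div_const _)

theorem pfun_eq_of_mem_proxSet {x : EuclideanSpace ℝ (Fin n)} {z : EuclideanSpace ℝ (Fin m)}
    (hz : z ∈ proxSet g μ (c x + μ • yh)) :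
    pfun f c g μ yh x = (Ffun f c μ yh x z : EReal) + g z := by
  have hsplit : ∀ w, (Ffun f c μ yh x w : EReal) + g w =
      (f x : EReal) + (g w + ((‖w - (c x + μ • yh)‖ ^ 2 / (2 * μ) : ℝ) : EReal)) := fun w => by
    rw [Ffun, norm_sub_rev, EReal.coe_add, add_assoc, add_comm (g w)]
  refine le_antisymm (iInf_le _ z) (le_iInf fun w => ?_)
  rw [hsplit, hsplit]
  exact add_le_add_right (hz w) _

theorem exists_pfun_eq_coe (hproper : ∃ z, g z ≠ ⊤)
    (hbdd : ∃ b : ℝ, ∀ x, (b : EReal) ≤ pfun f c g μ yh x) :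
    ∃ P : EuclideanSpace ℝ (Fin n) → ℝ, pfun f c g μ yh = fun x => (P x : EReal) := by
  obtain ⟨z, hz⟩ := hproper
  obtain ⟨b, hb⟩ := hbdd
  refine ⟨fun x => (pfun f c g μ yh x).toReal, funext fun x => (EReal.coe_toReal ?_ ?_).symm⟩
  · exact ne_top_of_le_ne_top (EReal.add_ne_top (EReal.coe_ne_top _) hz) (iInf_le _ z)
  · exact ne_bot_of_le_ne_bot (EReal.coe_ne_bot b) (hb x)

theorem le_add_Ffun_sub_of_mem_proxSet {P : EuclideanSpace ℝ (Fin n) → ℝ}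
    (hP : pfun f c g μ yh = fun x => (P x : EReal)) {x : EuclideanSpace ℝ (Fin n)}
    {z : EuclideanSpace ℝ (Fin m)} (hz : z ∈ proxSet g μ (c x + μ • yh))
    (y : EuclideanSpace ℝ (Fin n)) :
    P y ≤ P x + (Ffun f c μ yh y z - Ffun f c μ yh x z) := by
  have hx := pfun_eq_of_mem_proxSet (f := f) hz
  have hy : pfun f c g μ yh y ≤ (Ffun f c μ yh y z : EReal) + g z := iInf_le _ z
  simp only [hP] at hx hy
  have hgz : g z = ((P x - Ffun f c μ yh x z : ℝ) : EReal) := by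
    generalize g z = w at hx
    induction w using EReal.rec with
    | bot => simp at hx
    | top => simp at hx
    | coe w => rw [← EReal.coe_add, EReal.coe_eq_coe_iff] at hx; rw [hx, add_sub_cancel_left]
  rw [hgz, ← EReal.coe_add, EReal.coe_le_coe_iff] at hy
  linarith

theorem isBounded_range_of_mem_proxSet {γ₀ : ℝ} (hc : Continuous c) (hg : ProxBoundedAt g γ₀)
    (hμ : 0 < μ) (hμγ₀ : μ < γ₀) (hproper : ∃ z, g z ≠ ⊤) {x : ℕ → EuclideanSpace ℝ (Fin n)}
    {x₀ : EuclideanSpace ℝ (Fin n)} (hx : Tendsto x atTop (𝓝 x₀))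
    {z : ℕ → EuclideanSpace ℝ (Fin m)} (hz : ∀ k, z k ∈ proxSet g μ (c (x k) + μ • yh)) :
    IsBounded (Set.range z) := by
  refine (hg.isBounded_biUnion_proxSet hμ hμγ₀ hproper (Metric.isBounded_range_of_tendsto _
    (((hc.tendsto x₀).comp hx).add_const (μ • yh)))).subset ?_
  rintro _ ⟨k, rfl⟩
  exact Set.mem_biUnion ⟨k, rfl⟩ (hz k)

end AugmentedLagrangian

theorem descent_method_finite_termination_general {n m : ℕ}
    (f : EuclideanSpace ℝ (Fin n) → ℝ)
    (c : EuclideanSpace ℝ (Fin n) → EuclideanSpace ℝ (Fin m))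
    (g : EuclideanSpace ℝ (Fin m) → EReal)
    (hf : ContDiff ℝ 1 f) (hc : ContDiff ℝ 1 c)
    (hgproper : ∃ z, g z ≠ ⊤)
    (μ : ℝ) (hμpos : 0 < μ)
    (hμthr : ∃ γ0 : ℝ, μ < γ0 ∧ ProxBoundedAt g γ0)
    (yh : EuclideanSpace ℝ (Fin m))
    -- tolerance
    (ε : ℝ) (hε : 0 < ε)
    -- parameters of the descent method
    (α β θ ω ν : ℝ)
    (hα : α ∈ Set.Ioo (0 : ℝ) 1) (hβ : β ∈ Set.Ioo (0 : ℝ) 1)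
    (hθ : θ ∈ Set.Ioo (0 : ℝ) 1)
    (hω : ω ∈ Set.Ioc (0 : ℝ) 1) (hν : ν ∈ Set.Ioc (0 : ℝ) 1)
    -- iterates of the method
    (x : ℕ → EuclideanSpace ℝ (Fin n)) (zs : ℕ → EuclideanSpace ℝ (Fin m))
    (d : ℕ → EuclideanSpace ℝ (Fin n)) (γ : ℕ → ℝ) (l : ℕ → ℕ) (Φ : ℕ → EReal)
    (hΦ0 : Φ 0 = pfun f c g μ yh (x 0))
    (hzs : ∀ j, zs j ∈ proxSet g μ (c (x j) + μ • yh))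
    -- the algorithmic step is performed whenever the termination test has failed so far
    (hstep : ∀ j, (∀ i, i ≤ j → ε < ‖gradF f c μ yh (x i) (zs i)‖) →
      ((inner ℝ (gradF f c μ yh (x j) (zs j)) (d j) : ℝ) ≤
          -(θ * (‖gradF f c μ yh (x j) (zs j)‖ * ‖d j‖)) ∧
        ω * ‖gradF f c μ yh (x j) (zs j)‖ ≤ ‖d j‖) ∧
      γ j = β ^ l j ∧
      pfun f c g μ yh (x j + γ j • d j) ≤
        Φ j + ((α * γ j * (inner ℝ (gradF f c μ yh (x j) (zs j)) (d j) : ℝ) : ℝ) : EReal) ∧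
      (∀ l' < l j, ¬ (pfun f c g μ yh (x j + β ^ l' • d j) ≤
        Φ j + ((α * β ^ l' * (inner ℝ (gradF f c μ yh (x j) (zs j)) (d j) : ℝ) : ℝ)
          : EReal))) ∧
      pfun f c g μ yh (x (j + 1)) ≤ pfun f c g μ yh (x j + γ j • d j) ∧
      Φ (j + 1) =
        ((1 - ν : ℝ) : EReal) * Φ j + ((ν : ℝ) : EReal) * pfun f c g μ yh (x (j + 1)))
    -- inf p ∈ ℝ
    (hinf : ∃ b : ℝ, ∀ x', (b : EReal) ≤ pfun f c g μ yh x')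
    -- the sequence of iterates admits an accumulation point
    (hacc : ∃ (xstar : EuclideanSpace ℝ (Fin n)) (φ : ℕ → ℕ),
      StrictMono φ ∧ Tendsto (fun k => x (φ k)) atTop (𝓝 xstar)) :
    ∃ j, zs j ∈ proxSet g μ (c (x j) + μ • yh) ∧ ‖gradF f c μ yh (x j) (zs j)‖ ≤ ε := by
  by_contra! hcon
  have hgrad : ∀ j, ε < ‖gradF f c μ yh (x j) (zs j)‖ := fun j => hcon j (hzs j)
  have hrun := fun j => hstep j fun i _ => hgrad i
  choose hdir hγl hArm hfail hnext hΦrec using hrun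
  obtain ⟨P, hP⟩ := exists_pfun_eq_coe hgproper hinf
  obtain ⟨b, hb⟩ := hinf
  simp only [hP] at hΦ0 hΦrec hArm hfail hnext hb
  obtain ⟨φ, rfl⟩ := exists_eq_coe_of_affine_rec (a := fun j => P (x j)) hΦ0 hΦrec
  simp only [← EReal.coe_mul, ← EReal.coe_add, EReal.coe_le_coe_iff, EReal.coe_eq_coe_iff]
    at hΦ0 hΦrec hArm hfail hnext hb
  have hγ_pos : ∀ j, 0 < γ j := fun j => hγl j ▸ pow_pos hβ.1 _
  have hD : ∀ j, ⟪gradF f c μ yh (x j) (zs j), d j⟫_ℝ ≤ -(θ * ε * ‖d j‖) := fun j =>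
    (hdir j).1.trans <| neg_le_neg <| (mul_assoc θ ε _).trans_le <| mul_le_mul_of_nonneg_left
      (mul_le_mul_of_nonneg_right (hgrad j).le (norm_nonneg _)) hθ.1.le
  obtain ⟨hPφ, hγd⟩ := le_and_tendsto_of_nonmonotone_armijo (P := fun j => P (x j)) hα.1
    (mul_pos hθ.1 hε) hν hγ_pos (fun j => norm_nonneg (d j)) hD hΦ0.ge
    (fun j => (hnext j).trans (hArm j)) hΦrec (fun j => hb (x j))
  have hγ : Tendsto γ atTop (𝓝 0) :=
    tendsto_zero_of_mul_le hγd (mul_pos hω.1 hε) (fun j => (hγ_pos j).le) fun j => by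
      nlinarith [mul_le_mul_of_nonneg_left ((mul_le_mul_of_nonneg_left (hgrad j).le hω.1.le).trans
        (hdir j).2) (hγ_pos j).le]
  obtain ⟨x₀, σ, hσ, hx⟩ := hacc
  obtain ⟨γ₀, hμγ₀, hg⟩ := hμthr
  obtain ⟨δ, hδ, harmijo⟩ := (contDiff_Ffun (μ := μ) (yh := yh) hf hc).eventually_armijo hx
    (isBounded_range_of_mem_proxSet hc.continuous hg hμpos hμγ₀ hgproper hx fun k => hzs (σ k))
    (fun k => le_add_Ffun_sub_of_mem_proxSet hP (hzs (σ k))) (mul_pos hθ.1 hε) hα.2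
    (fun k => hD (σ k))
  obtain ⟨k, hk_armijo, hk_step, hk_γ⟩ := (harmijo.and
    (((hγd.comp hσ.tendsto_atTop).eventually (gt_mem_nhds (mul_pos hβ.1 hδ))).and
      ((hγ.comp hσ.tendsto_atTop).eventually (gt_mem_nhds one_pos)))).exists
  -- every step short enough passes the test, so backtracking cannot have gone below `β δ / ‖d‖`
  exact lt_asymm hk_step (backtracking_lower_bound (T := fun t => P (x (σ k) + t • d (σ k)) ≤
      φ (σ k) + α * t * ⟪gradF f c μ yh (x (σ k)) (zs (σ k)), d (σ k)⟫_ℝ) hβ.1 (hγl _) hk_γ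
    (fun t ht htd => (hk_armijo t ht htd).trans (add_le_add (hPφ (σ k)) le_rfl)) (hfail (σ k)))

/-- With tolerance ε > 0, the nonmonotone descent method with oracle
terminates after finitely many iterations, returning an ε-Υ-stationary point of p with
certificate in the oracle: there is an iteration j at which ‖∇ₓF(xʲ, zʲ)‖ ≤ ε, with
zʲ ∈ O(xʲ). The algorithmic steps are assumed to be performed as long as the termination
test has not been triggered. -/
theorem descent_method_finite_termination {n m : ℕ}
    (f : EuclideanSpace ℝ (Fin n) → ℝ)
    (c : EuclideanSpace ℝ (Fin n) → EuclideanSpace ℝ (Fin m))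
    (g : EuclideanSpace ℝ (Fin m) → EReal)
    (hf : ContDiff ℝ 1 f) (hc : ContDiff ℝ 1 c)
    (hgproper : ∃ z, g z ≠ ⊤) (hgbot : ∀ z, g z ≠ ⊥)
    (hglsc : LowerSemicontinuous g)
    (μ : ℝ) (hμpos : 0 < μ)
    (hμthr : ∃ γ0 : ℝ, μ < γ0 ∧ ProxBoundedAt g γ0)
    (yh : EuclideanSpace ℝ (Fin m))
    -- tolerance
    (ε : ℝ) (hε : 0 < ε)
    -- parameters of the descent method
    (α β θ ω ν : ℝ)
    (hα : α ∈ Set.Ioo (0 : ℝ) 1) (hβ : β ∈ Set.Ioo (0 : ℝ) 1)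
    (hθ : θ ∈ Set.Ioo (0 : ℝ) 1)
    (hω : ω ∈ Set.Ioc (0 : ℝ) 1) (hν : ν ∈ Set.Ioc (0 : ℝ) 1)
    -- iterates of the method
    (x : ℕ → EuclideanSpace ℝ (Fin n)) (zs : ℕ → EuclideanSpace ℝ (Fin m))
    (d : ℕ → EuclideanSpace ℝ (Fin n)) (γ : ℕ → ℝ) (l : ℕ → ℕ) (Φ : ℕ → EReal)
    (hΦ0 : Φ 0 = pfun f c g μ yh (x 0))
    (hzs : ∀ j, zs j ∈ proxSet g μ (c (x j) + μ • yh))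
    -- the algorithmic step is performed whenever the termination test has failed so far
    (hstep : ∀ j, (∀ i, i ≤ j → ε < ‖gradF f c μ yh (x i) (zs i)‖) →
      ((inner ℝ (gradF f c μ yh (x j) (zs j)) (d j) : ℝ) ≤
          -(θ * (‖gradF f c μ yh (x j) (zs j)‖ * ‖d j‖)) ∧
        ω * ‖gradF f c μ yh (x j) (zs j)‖ ≤ ‖d j‖) ∧
      γ j = β ^ l j ∧
      pfun f c g μ yh (x j + γ j • d j) ≤
        Φ j + ((α * γ j * (inner ℝ (gradF f c μ yh (x j) (zs j)) (d j) : ℝ) : ℝ) : EReal) ∧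
      (∀ l' < l j, ¬ (pfun f c g μ yh (x j + β ^ l' • d j) ≤
        Φ j + ((α * β ^ l' * (inner ℝ (gradF f c μ yh (x j) (zs j)) (d j) : ℝ) : ℝ)
          : EReal))) ∧
      pfun f c g μ yh (x (j + 1)) ≤ pfun f c g μ yh (x j + γ j • d j) ∧
      Φ (j + 1) =
        ((1 - ν : ℝ) : EReal) * Φ j + ((ν : ℝ) : EReal) * pfun f c g μ yh (x (j + 1)))
    -- inf p ∈ ℝ
    (hinf : ∃ b : ℝ, ∀ x', (b : EReal) ≤ pfun f c g μ yh x')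
    -- the sequence of iterates admits an accumulation point
    (hacc : ∃ (xstar : EuclideanSpace ℝ (Fin n)) (φ : ℕ → ℕ),
      StrictMono φ ∧ Tendsto (fun k => x (φ k)) atTop (𝓝 xstar)) :
    ∃ j, zs j ∈ proxSet g μ (c (x j) + μ • yh) ∧ ‖gradF f c μ yh (x j) (zs j)‖ ≤ ε :=
  descent_method_finite_termination_general f c g hf hc hgproper μ hμpos hμthr yh ε hε α β θ ω ν hα
    hβ hθ hω hν x zs d γ l Φ hΦ0 hzs hstep hinf hacc
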